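/- The projection Gaussian kernel k([Y₁],[Y₂]) := exp(−γ · ½ ‖Y₁Y₁ᵀ − Y₂Y₂ᵀ‖_F²) on the Grassmann manifold of r-dimensional subspaces of ℝⁿ (with Y₁, Y₂ being n × r matrices with orthonormal columns representing the subspaces) is a well-defined positive definite kernel for every γ > 0. -/
import Mathlib


open Matrix

def IsPosDefKernel {X : Type*} (k : X → X → ℝ) : Prop :=
  (∀ x y, k x y = k y x) ∧
  ∀ (m : ℕ) (x : Fin m → X) (c : Fin m → ℝ),
    0 ≤ ∑ i, ∑ j, c i * c j * k (x i) (x j)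

/-- Squared Frobenius distance between two matrices. -/
def frobSqDist {n : ℕ} (A B : Matrix (Fin n) (Fin n) ℝ) : ℝ :=
  ∑ i, ∑ j, (A i j - B i j) ^ 2

/-- Matrices with orthonormal columns representing points of the Grassmannian. -/
def Stiefel (n r : ℕ) : Type := {Y : Matrix (Fin n) (Fin r) ℝ // Yᵀ * Y = 1}

/-- The subspace spanned by the columns of `Y`. -/
def colSpan {n r : ℕ} (Y : Stiefel n r) : Submodule ℝ (Fin n → ℝ) :=
  Submodule.span ℝ (Set.range (Y.1)ᵀ)

/-- The projection Gaussian kernel on the Grassmann manifold, computed on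
orthonormal representatives. -/
noncomputable def projGaussKernel {n r : ℕ} (γ : ℝ) (Y₁ Y₂ : Stiefel n r) : ℝ :=
  Real.exp (-γ * ((1 / 2) * frobSqDist (Y₁.1 * (Y₁.1)ᵀ) (Y₂.1 * (Y₂.1)ᵀ)))

/-! ### Auxiliary lemmas -/

lemma stiefel_factor {n r : ℕ} (Y Y' : Stiefel n r)
    (h : colSpan Y' ≤ colSpan Y) : ∃ M : Matrix (Fin r) (Fin r) ℝ, Y'.1 = Y.1 * M := by
  have hc : ∀ j, ∃ c : Fin r → ℝ, ∑ k, c k • (Y.1)ᵀ k = (Y'.1)ᵀ j := by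
    intro j
    have hm : (Y'.1)ᵀ j ∈ colSpan Y :=
      h (Submodule.subset_span (Set.mem_range_self j))
    exact (Submodule.mem_span_range_iff_exists_fun ℝ).mp hm
  choose c hcc using hc
  refine ⟨Matrix.of fun k j => c j k, ?_⟩
  ext i j
  have h1 := congrFun (hcc j) i
  simp only [Finset.sum_apply, Pi.smul_apply, smul_eq_mul, Matrix.transpose_apply] at h1
  simp only [Matrix.mul_apply, Matrix.of_apply]
  rw [← h1]
  exact Finset.sum_congr rfl fun k _ => mul_comm _ _

lemma proj_eq_of_colSpan_eq {n r : ℕ} (Y Y' : Stiefel n r)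
    (h : colSpan Y = colSpan Y') : Y.1 * (Y.1)ᵀ = Y'.1 * (Y'.1)ᵀ := by
  obtain ⟨M, hM⟩ := stiefel_factor Y Y' h.ge
  have hMM : Mᵀ * M = 1 := by
    have h2 := Y'.2
    rw [hM, Matrix.transpose_mul] at h2
    rw [Matrix.mul_assoc, ← Matrix.mul_assoc (Y.1)ᵀ, Y.2, Matrix.one_mul] at h2
    exact h2
  have hMMt : M * Mᵀ = 1 := mul_eq_one_comm.mp hMM
  rw [hM, Matrix.transpose_mul, Matrix.mul_assoc, ← Matrix.mul_assoc M, hMMt,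
    Matrix.one_mul]

/-- Real exponential as its power series. -/
lemma real_exp_tsum (x : ℝ) : Real.exp x = ∑' p : ℕ, x ^ p / p.factorial := by
  rw [Real.exp_eq_exp_ℝ, NormedSpace.exp_eq_tsum_div]

/-- The kernel `exp (t * ⟨v i, v j⟩)` is positive semidefinite for `t ≥ 0`. -/
lemma exp_inner_kernel_psd {ι : Type*} [Fintype ι] (t : ℝ) (ht : 0 ≤ t) (m : ℕ)
    (v : Fin m → ι → ℝ) (c : Fin m → ℝ) :
    0 ≤ ∑ i, ∑ j, c i * c j * Real.exp (t * ∑ k, v i k * v j k) := by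
  classical
  set s : Fin m → Fin m → ℝ := fun i j => ∑ k, v i k * v j k with hs
  set P : Fin m → (ℕ → ι) → ℝ := fun i q => ∏ a ∈ Finset.range 0, (1:ℝ) with hP
  -- products over Fin p
  have hpow : ∀ (p : ℕ) (i j : Fin m), (s i j) ^ p
      = ∑ q : Fin p → ι, (∏ a, v i (q a)) * (∏ a, v j (q a)) := by
    intro p i j
    rw [hs]
    rw [Fintype.sum_pow (fun k => v i k * v j k) p]
    exact Finset.sum_congr rfl fun q _ => Finset.prod_mul_distrib
  have expand : ∀ (p : ℕ) (i j : Fin m),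
      c i * c j * ((t * s i j) ^ p / p.factorial)
      = (t ^ p / p.factorial) *
        ∑ q : Fin p → ι, (c i * ∏ a, v i (q a)) * (c j * ∏ a, v j (q a)) := by
    intro p i j
    rw [mul_pow, hpow p i j, Finset.mul_sum, Finset.sum_div, Finset.mul_sum, Finset.mul_sum]
    refine Finset.sum_congr rfl fun q _ => ?_
    field_simp
  have key : ∑ i, ∑ j, c i * c j * Real.exp (t * s i j)
      = ∑' p : ℕ, ∑ q : Fin m × Fin m,
          c q.1 * c q.2 * ((t * s q.1 q.2) ^ p / p.factorial) := by
    have h1 : ∑ i, ∑ j, c i * c j * Real.exp (t * s i j)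
        = ∑ q : Fin m × Fin m, c q.1 * c q.2 * Real.exp (t * s q.1 q.2) :=
      (Fintype.sum_prod_type
        (f := fun q : Fin m × Fin m => c q.1 * c q.2 * Real.exp (t * s q.1 q.2))).symm
    rw [h1]
    have hsum : ∀ q ∈ (Finset.univ : Finset (Fin m × Fin m)),
        Summable (fun p : ℕ => c q.1 * c q.2 * ((t * s q.1 q.2) ^ p / p.factorial)) :=
      fun q _ => (Real.summable_pow_div_factorial (t * s q.1 q.2)).mul_left _
    have h2 : ∀ q : Fin m × Fin m, c q.1 * c q.2 * Real.exp (t * s q.1 q.2)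
        = ∑' p : ℕ, c q.1 * c q.2 * ((t * s q.1 q.2) ^ p / p.factorial) := fun q => by
      rw [real_exp_tsum, tsum_mul_left]
    simp_rw [h2]
    exact (Summable.tsum_finsetSum hsum).symm
  rw [key]
  refine tsum_nonneg fun p => ?_
  have h2 : ∑ q : Fin m × Fin m, c q.1 * c q.2 * ((t * s q.1 q.2) ^ p / p.factorial)
      = ∑ i, ∑ j, c i * c j * ((t * s i j) ^ p / p.factorial) :=
    Fintype.sum_prod_type
      (f := fun q : Fin m × Fin m => c q.1 * c q.2 * ((t * s q.1 q.2) ^ p / p.factorial))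
  rw [h2]
  have h3 : ∑ i, ∑ j, c i * c j * ((t * s i j) ^ p / p.factorial)
      = (t ^ p / p.factorial) *
        ∑ q : Fin p → ι, (∑ i, c i * ∏ a, v i (q a)) ^ 2 := by
    simp_rw [expand p, ← Finset.mul_sum]
    congr 1
    calc ∑ i, ∑ j, ∑ q : Fin p → ι, (c i * ∏ a, v i (q a)) * (c j * ∏ a, v j (q a))
        = ∑ i, ∑ q : Fin p → ι, ∑ j, (c i * ∏ a, v i (q a)) * (c j * ∏ a, v j (q a)) :=
          Finset.sum_congr rfl fun i _ => Finset.sum_comm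
      _ = ∑ q : Fin p → ι, ∑ i, ∑ j, (c i * ∏ a, v i (q a)) * (c j * ∏ a, v j (q a)) :=
          Finset.sum_comm
      _ = ∑ q : Fin p → ι, (∑ i, c i * ∏ a, v i (q a)) ^ 2 :=
          Finset.sum_congr rfl fun q _ => by
            rw [sq, Finset.sum_mul_sum]
  rw [h3]
  apply mul_nonneg
  · positivity
  · exact Finset.sum_nonneg fun q _ => sq_nonneg _

lemma frobSqDist_comm {n : ℕ} (A B : Matrix (Fin n) (Fin n) ℝ) :
    frobSqDist A B = frobSqDist B A := by
  unfold frobSqDist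
  refine Finset.sum_congr rfl fun i _ => Finset.sum_congr rfl fun j _ => ?_
  ring

theorem projection_gaussian_kernel_well_defined_and_posdef
    (n r : ℕ) (γ : ℝ) (hγ : 0 < γ) :
    -- well-definedness: the kernel value depends only on the spanned subspaces
    (∀ Y₁ Y₁' Y₂ Y₂' : Stiefel n r, colSpan Y₁ = colSpan Y₁' → colSpan Y₂ = colSpan Y₂' →
      projGaussKernel γ Y₁ Y₂ = projGaussKernel γ Y₁' Y₂') ∧
    -- positive definiteness
    IsPosDefKernel (projGaussKernel (n := n) (r := r) γ) := by
  constructor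
  · intro Y₁ Y₁' Y₂ Y₂' h₁ h₂
    unfold projGaussKernel
    rw [proj_eq_of_colSpan_eq Y₁ Y₁' h₁, proj_eq_of_colSpan_eq Y₂ Y₂' h₂]
  · constructor
    · intro x y
      unfold projGaussKernel
      rw [frobSqDist_comm]
    · intro m x c
      set A : Fin m → Matrix (Fin n) (Fin n) ℝ := fun i => (x i).1 * ((x i).1)ᵀ with hA
      set ip : Matrix (Fin n) (Fin n) ℝ → Matrix (Fin n) (Fin n) ℝ → ℝ :=
        fun X Z => ∑ q : Fin n × Fin n, X q.1 q.2 * Z q.1 q.2 with hipdef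
      have hfd : ∀ X Z : Matrix (Fin n) (Fin n) ℝ,
          frobSqDist X Z = ip X X + ip Z Z - 2 * ip X Z := by
        intro X Z
        unfold frobSqDist
        have h0 : (∑ i, ∑ j, (X i j - Z i j) ^ 2)
            = ∑ q : Fin n × Fin n, (X q.1 q.2 - Z q.1 q.2) ^ 2 :=
          (Fintype.sum_prod_type
            (f := fun q : Fin n × Fin n => (X q.1 q.2 - Z q.1 q.2) ^ 2)).symm
        rw [h0, hipdef]
        rw [Finset.mul_sum, ← Finset.sum_add_distrib, ← Finset.sum_sub_distrib]
        exact Finset.sum_congr rfl fun q _ => by ring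
      have hker : ∀ i j, projGaussKernel γ (x i) (x j)
          = Real.exp (-(γ/2) * ip (A i) (A i))
            * Real.exp (-(γ/2) * ip (A j) (A j))
            * Real.exp (γ * ∑ k : Fin n × Fin n, A i k.1 k.2 * A j k.1 k.2) := by
        intro i j
        unfold projGaussKernel
        rw [← Real.exp_add, ← Real.exp_add]
        rw [show ((x i).1 * ((x i).1)ᵀ) = A i from rfl,
          show ((x j).1 * ((x j).1)ᵀ) = A j from rfl, hfd (A i) (A j)]
        rw [show (∑ k : Fin n × Fin n, A i k.1 k.2 * A j k.1 k.2) = ip (A i) (A j) from rfl]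
        ring_nf
      simp_rw [hker]
      have hmain := exp_inner_kernel_psd (ι := Fin n × Fin n) γ hγ.le m
        (fun i q => A i q.1 q.2)
        (fun i => c i * Real.exp (-(γ/2) * ip (A i) (A i)))
      refine le_trans hmain (le_of_eq ?_)
      refine Finset.sum_congr rfl fun i _ => Finset.sum_congr rfl fun j _ => ?_
      ring
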